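/- Let G be a data graph and Q a BGP query with connected-variable decomposition D_CV(Q) = (Q_1, …, Q_n). Then the set of total embeddings of Q in G equals the set of all joins e_1 ⊗ … ⊗ e_n where each e_i ranges over the total embeddings of Q_i in G; in particular, the set of answers of Q over G is the cartesian product of the sets of answers of the subqueries in D_CV(Q). -/
import Mathlib


/-!
Formalization of BGP queries over Linked Data graphs.

Nodes are drawn from a type `N`, predicates from a type `P`.
`Uso` is the set of URIs usable as subjects/objects, `Lit` the set of literals,
`Var` the set of variables.  Partial mappings are modelled as `N → Option N`.
-/

namespace RDFBGP

variable {N P : Type}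

/-- A triple (subject, predicate, object). -/
abbrev Triple (N P : Type) := N × P × N

/-- Subject of a triple. -/
def subj (t : Triple N P) : N := t.1

/-- Predicate of a triple. -/
def pred (t : Triple N P) : P := t.2.1

/-- Object of a triple. -/
def obj (t : Triple N P) : N := t.2.2

/-- The set of nodes (subjects and objects) of a set of triples. -/
def nodes (Q : Set (Triple N P)) : Set N := {v | ∃ t ∈ Q, subj t = v ∨ obj t = v}

/-- The variables of a query: its nodes that lie in `Var`. -/
def varsOf (Var : Set N) (Q : Set (Triple N P)) : Set N := nodes Q ∩ Var

/-- A data graph: a nonempty set of data triples (subjects are URIs, objects URIs or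
literals; no variables occur). -/
def IsDataGraph (Uso Lit : Set N) (G : Set (Triple N P)) : Prop :=
  G.Nonempty ∧ ∀ t ∈ G, subj t ∈ Uso ∧ obj t ∈ Uso ∪ Lit

/-- A BGP query: a nonempty set of query triples (subjects are URIs or variables,
objects are URIs, literals or variables). -/
def IsBGP (Uso Lit Var : Set N) (Q : Set (Triple N P)) : Prop :=
  Q.Nonempty ∧ ∀ t ∈ Q, subj t ∈ Uso ∪ Var ∧ obj t ∈ Uso ∪ Lit ∪ Var

/-- A query is ground if it contains no variables. -/
def Ground (Var : Set N) (Q : Set (Triple N P)) : Prop := varsOf Var Q = ∅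

/-- Two nodes are adjacent in `Q` if some triple of `Q` connects them (in either
direction). -/
def adjStep (Q : Set (Triple N P)) (u v : N) : Prop :=
  ∃ p : P, (u, p, v) ∈ Q ∨ (v, p, u) ∈ Q

/-- `vs` is the node sequence of a generalized path in `Q`: at least two pairwise
distinct nodes, consecutive nodes connected by triples of `Q` (in either direction). -/
def IsGenPathSeq (Q : Set (Triple N P)) (vs : List N) : Prop :=
  2 ≤ vs.length ∧ vs.Nodup ∧ vs.Chain' (adjStep Q)

/-- `vs` is the node sequence of a generalized path in `Q` between `u` and `v`. -/
def GenPathBetween (Q : Set (Triple N P)) (u v : N) (vs : List N) : Prop :=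
  IsGenPathSeq Q vs ∧ vs.head? = some u ∧ vs.getLast? = some v

/-- `Part` is a connected-variable partition of the set of variables of `Q`:
a partition of `varsOf Var Q` such that (1) any two distinct variables of a class are
connected by a generalized path all of whose nodes are variables of that class, and
(2) no triple of `Q` has a variable of one class as subject and a variable of a
different class as object. -/
def IsCVPartition (Var : Set N) (Q : Set (Triple N P)) (Part : Set (Set N)) : Prop :=
  (∀ Pi ∈ Part, Pi.Nonempty) ∧
  (⋃₀ Part = varsOf Var Q) ∧
  (∀ Pi ∈ Part, ∀ Pj ∈ Part, Pi ≠ Pj → Disjoint Pi Pj) ∧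
  (∀ Pi ∈ Part, ∀ u ∈ Pi, ∀ v ∈ Pi, u ≠ v →
      ∃ vs, GenPathBetween Q u v vs ∧ ∀ w ∈ vs, w ∈ Pi) ∧
  (∀ Pi ∈ Part, ∀ Pj ∈ Part, Pi ≠ Pj →
      ¬ ∃ t ∈ Q, (subj t ∈ Pi ∧ obj t ∈ Pj) ∨ (subj t ∈ Pj ∧ obj t ∈ Pi))

/-- `Q` is loosely-connected: every generalized path between two distinct variables
contains at least one non-variable node. -/
def LooselyConnected (Var : Set N) (Q : Set (Triple N P)) : Prop :=
  ∀ X ∈ varsOf Var Q, ∀ Y ∈ varsOf Var Q, X ≠ Y →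
    ∀ vs, GenPathBetween Q X Y vs → ∃ w ∈ vs, w ∉ Var

/-- The subquery of `Q` induced by a class `Pi` of variables:
`Q_{P_i} = { (s,p,o) ∈ Q : s ∈ P_i or o ∈ P_i }`. -/
def classQuery (Q : Set (Triple N P)) (Pi : Set N) : Set (Triple N P) :=
  {t ∈ Q | subj t ∈ Pi ∨ obj t ∈ Pi}

/-- The ground remainder `Q_G = Q \ ∪_i Q_{P_i}`. -/
def groundRest (Q : Set (Triple N P)) (Part : Set (Set N)) : Set (Triple N P) :=
  Q \ ⋃ Pi ∈ Part, classQuery Q Pi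

/-- The connected-variable decomposition of `Q` w.r.t. the connected-variable
partition `Part`: the queries `Q_{P_i}` together with the ground query `Q_G` when it
is nonempty. -/
def DCV (Q : Set (Triple N P)) (Part : Set (Set N)) : Set (Set (Triple N P)) :=
  {Qi | ∃ Pi ∈ Part, Qi = classQuery Q Pi} ∪
    {Qg | Qg = groundRest Q Part ∧ Qg.Nonempty}

/-- A simple var-centric (generalized) star query: there is a central node `c` which
is a variable, every triple has `c` as subject or object, and every node adjacent to
`c` is a constant. -/
def SimpleVarCentricStar (Var : Set N) (Q : Set (Triple N P)) : Prop :=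
  ∃ c ∈ nodes Q, c ∈ Var ∧
    (∀ t ∈ Q, subj t = c ∨ obj t = c) ∧
    (∀ t ∈ Q, (subj t = c → obj t ∉ Var) ∧ (obj t = c → subj t ∉ Var))

/-- A total embedding of `Q` in `G`: a mapping defined exactly on the nodes of `Q`,
fixing every non-variable node, and mapping every triple of `Q` into a triple of `G`. -/
def TotalEmb (Var : Set N) (Q G : Set (Triple N P)) (e : N → Option N) : Prop :=
  (∀ v, (e v).isSome ↔ v ∈ nodes Q) ∧
  (∀ v ∈ nodes Q, v ∉ Var → e v = some v) ∧
  (∀ t ∈ Q, ∃ s' o', e (subj t) = some s' ∧ e (obj t) = some o' ∧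
      (s', pred t, o') ∈ G)

/-- A partial embedding of `Q` in `G`: a partial mapping on the nodes of `Q`,
fixing every non-variable node on which it is defined, and mapping every triple of
`Q` both of whose endpoints are defined into a triple of `G`. -/
def PartialEmb (Var : Set N) (Q G : Set (Triple N P)) (e : N → Option N) : Prop :=
  (∀ v, (e v).isSome → v ∈ nodes Q) ∧
  (∀ v ∈ nodes Q, v ∉ Var → ∀ w, e v = some w → w = v) ∧
  (∀ t ∈ Q, ∀ s' o', e (subj t) = some s' → e (obj t) = some o' →
      (s', pred t, o') ∈ G)

/-- Two partial mappings are compatible if they agree wherever both are defined. -/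
def Compatible (e₁ e₂ : N → Option N) : Prop :=
  ∀ v a b, e₁ v = some a → e₂ v = some b → a = b

/-- The join `e₁ ⊗ e₂` of two partial mappings: agrees with `e₁` wherever `e₁` is
defined and with `e₂` wherever `e₂` is defined and `e₁` is not. -/
def pjoin (e₁ e₂ : N → Option N) : N → Option N :=
  fun v => (e₁ v).elim (e₂ v) some

/-- The iterated join `e₁ ⊗ e₂ ⊗ … ⊗ eₙ` of a list of partial mappings. -/
def pjoinList (l : List (N → Option N)) : N → Option N :=
  l.foldr pjoin (fun _ => none)

open Classical in
/-- The restriction of a partial mapping to a set of nodes. -/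
noncomputable def restrictTo (S : Set N) (e : N → Option N) : N → Option N :=
  fun v => if v ∈ S then e v else none

open Classical in
/-- The identity partial mapping on a set of nodes. -/
noncomputable def idOn (S : Set N) : N → Option N :=
  fun v => if v ∈ S then some v else none

/-- The answer determined by an embedding: its restriction to the variables of `Q`. -/
noncomputable def answerOf (Var : Set N) (Q : Set (Triple N P)) (e : N → Option N) :
    N → Option N :=
  restrictTo (varsOf Var Q) e

/-- The set of answers of `Q` over `G`. -/
def answers (Var : Set N) (Q G : Set (Triple N P)) : Set (N → Option N) :=
  {a | ∃ e, TotalEmb Var Q G e ∧ a = answerOf Var Q e}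

open Classical in
/-- Substituting the constant `c` for the variable `X` in a triple. -/
noncomputable def substTriple (X c : N) (t : Triple N P) : Triple N P :=
  ((if t.1 = X then c else t.1), t.2.1, (if t.2.2 = X then c else t.2.2))

/-- The query `Q[X := c]` obtained by replacing every occurrence of `X` by `c`. -/
noncomputable def substQuery (X c : N) (Q : Set (Triple N P)) : Set (Triple N P) :=
  substTriple X c '' Q


section DCVAux

variable {N P : Type}

theorem pjoinList_cons' (e : N → Option N) (l : List (N → Option N)) :
    pjoinList (e :: l) = pjoin e (pjoinList l) := rfl

theorem pjoinList_none' {l : List (N → Option N)} {v : N} :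
    pjoinList l v = none ↔ ∀ e ∈ l, e v = none := by
  induction l with
  | nil => simp [pjoinList]
  | cons e l ih =>
    rw [pjoinList_cons']
    cases h : e v with
    | none => simp [pjoin, h, ih]
    | some a => simp [pjoin, h]

theorem pjoinList_some_mem' {l : List (N → Option N)} {v a : N}
    (h : pjoinList l v = some a) : ∃ e ∈ l, e v = some a := by
  induction l with
  | nil => simp [pjoinList] at h
  | cons e l ih =>
    rw [pjoinList_cons'] at h
    cases he : e v with
    | none =>
      simp only [pjoin, he, Option.elim] at h
      obtain ⟨e', he', h'⟩ := ih h
      exact ⟨e', by simp [he'], h'⟩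
    | some b =>
      simp only [pjoin, he, Option.elim] at h
      exact ⟨e, by simp, by rw [he, h]⟩

/-- Pairwise compatibility of a list of partial mappings. -/
def ListCompat (l : List (N → Option N)) : Prop :=
  ∀ e₁ ∈ l, ∀ e₂ ∈ l, ∀ v a b, e₁ v = some a → e₂ v = some b → a = b

theorem pjoinList_some_iff' {l : List (N → Option N)} (hc : ListCompat l) {v a : N} :
    pjoinList l v = some a ↔ ∃ e ∈ l, e v = some a := by
  constructor
  · exact pjoinList_some_mem'
  · rintro ⟨e, he, hev⟩
    cases hp : pjoinList l v with
    | none =>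
      rw [pjoinList_none'] at hp
      rw [hp e he] at hev; exact absurd hev (by simp)
    | some b =>
      obtain ⟨e', he', h'⟩ := pjoinList_some_mem' hp
      rw [hc e he e' he' v a b hev h']

theorem restrictTo_some' {S : Set N} {e : N → Option N} {v a : N} :
    restrictTo S e v = some a ↔ v ∈ S ∧ e v = some a := by
  unfold restrictTo; split <;> simp_all

theorem varsOf_classQuery' {Var : Set N} {Q : Set (Triple N P)} {Part : Set (Set N)}
    (hPart : IsCVPartition Var Q Part) {Pi : Set N} (hPi : Pi ∈ Part) :
    varsOf Var (classQuery Q Pi) = Pi := by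
  obtain ⟨hne, hcover, hdisj, hpath, hcross⟩ := hPart
  ext v
  constructor
  · rintro ⟨⟨t, ⟨htQ, hcls⟩, hend⟩, hvVar⟩
    have hvQ : v ∈ varsOf Var Q := ⟨⟨t, htQ, hend⟩, hvVar⟩
    rw [← hcover] at hvQ
    obtain ⟨Pj, hPj, hvPj⟩ := hvQ
    by_cases hij : Pi = Pj
    · exact hij ▸ hvPj
    · exfalso
      rcases hend with hsubj | hobj
      · rcases hcls with hs | ho
        · exact Set.disjoint_left.mp (hdisj Pi hPi Pj hPj hij) (hsubj ▸ hs) hvPj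
        · exact hcross Pi hPi Pj hPj hij ⟨t, htQ, Or.inr ⟨hsubj.symm ▸ hvPj, ho⟩⟩
      · rcases hcls with hs | ho
        · exact hcross Pi hPi Pj hPj hij ⟨t, htQ, Or.inl ⟨hs, hobj.symm ▸ hvPj⟩⟩
        · exact Set.disjoint_left.mp (hdisj Pi hPi Pj hPj hij) (hobj ▸ ho) hvPj
  · intro hvPi
    have hvQ : v ∈ varsOf Var Q := by
      rw [← hcover]; exact ⟨Pi, hPi, hvPi⟩
    obtain ⟨⟨t, htQ, hend⟩, hvVar⟩ := hvQ
    refine ⟨⟨t, ⟨htQ, ?_⟩, hend⟩, hvVar⟩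
    rcases hend with hsubj | hobj
    · exact Or.inl (hsubj ▸ hvPi)
    · exact Or.inr (hobj ▸ hvPi)

theorem varsOf_groundRest' {Var : Set N} {Q : Set (Triple N P)} {Part : Set (Set N)}
    (hPart : IsCVPartition Var Q Part) :
    varsOf Var (groundRest Q Part) = ∅ := by
  obtain ⟨hne, hcover, hdisj, hpath, hcross⟩ := hPart
  ext v
  simp only [Set.mem_empty_iff_false, iff_false]
  rintro ⟨⟨t, ⟨htQ, htG⟩, hend⟩, hvVar⟩
  have hvQ : v ∈ varsOf Var Q := ⟨⟨t, htQ, hend⟩, hvVar⟩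
  rw [← hcover] at hvQ
  obtain ⟨Pi, hPi, hvPi⟩ := hvQ
  apply htG
  simp only [Set.mem_iUnion]
  refine ⟨Pi, hPi, htQ, ?_⟩
  rcases hend with hsubj | hobj
  · exact Or.inl (hsubj ▸ hvPi)
  · exact Or.inr (hobj ▸ hvPi)

end DCVAux

end RDFBGP


open RDFBGP in
/-- the total embeddings of `Q` in `G` are exactly the joins of total
embeddings of the members of the connected-variable decomposition of `Q`; in
particular the set of answers of `Q` is the cartesian product (join) of the answer
sets of the subqueries. -/
theorem dcv_embeddings_characterization {N P : Type} (Uso Lit Var : Set N)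
    (hUsoInf : Uso.Infinite) (hUsoVar : Disjoint Uso Var)
    (hLitVar : Disjoint Lit Var) (hUsoLit : Disjoint Uso Lit)
    (Q G : Set (Triple N P)) (Part : Set (Set N))
    (n : ℕ) (Qs : Fin n → Set (Triple N P))
    (hQ : IsBGP Uso Lit Var Q) (hG : IsDataGraph Uso Lit G)
    (hPart : IsCVPartition Var Q Part)
    (hQsInj : Function.Injective Qs)
    (hQsRange : Set.range Qs = DCV Q Part) :
    ({e | TotalEmb Var Q G e} =
      {e | ∃ es : Fin n → N → Option N,
        (∀ i, TotalEmb Var (Qs i) G (es i)) ∧ e = pjoinList (List.ofFn es)}) ∧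
    (answers Var Q G =
      {a | ∃ as : Fin n → N → Option N,
        (∀ i, as i ∈ answers Var (Qs i) G) ∧ a = pjoinList (List.ofFn as)}) := by
  obtain ⟨hpne, hcover, hdisj, hpath, hcross⟩ := hPart
  have hPart' : IsCVPartition Var Q Part := ⟨hpne, hcover, hdisj, hpath, hcross⟩
  -- classification of the subqueries
  have hClass : ∀ i, varsOf Var (Qs i) = ∅ ∨
      ∃ Pi ∈ Part, Qs i = classQuery Q Pi ∧ varsOf Var (Qs i) = Pi := by
    intro i
    have hi : Qs i ∈ DCV Q Part := by rw [← hQsRange]; exact ⟨i, rfl⟩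
    rcases hi with ⟨Pi, hPi, hq⟩ | ⟨hq, _⟩
    · exact Or.inr ⟨Pi, hPi, hq, by rw [hq, varsOf_classQuery' hPart' hPi]⟩
    · exact Or.inl (by rw [hq, varsOf_groundRest' hPart'])
  have hQsSub : ∀ i, Qs i ⊆ Q := by
    intro i
    have hi : Qs i ∈ DCV Q Part := by rw [← hQsRange]; exact ⟨i, rfl⟩
    rcases hi with ⟨Pi, hPi, hq⟩ | ⟨hq, _⟩
    · rw [hq]; exact fun t ht => ht.1
    · rw [hq]; exact fun t ht => ht.1
  have hNodesSub : ∀ i, nodes (Qs i) ⊆ nodes Q := by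
    rintro i v ⟨t, ht, hend⟩; exact ⟨t, hQsSub i ht, hend⟩
  have hVarsSub : ∀ i, varsOf Var (Qs i) ⊆ varsOf Var Q := by
    rintro i v ⟨hn, hv⟩; exact ⟨hNodesSub i hn, hv⟩
  have hMem : ∀ t ∈ Q, ∃ i, t ∈ Qs i := by
    intro t htQ
    by_cases h : ∃ Pi ∈ Part, subj t ∈ Pi ∨ obj t ∈ Pi
    · obtain ⟨Pi, hPi, hor⟩ := h
      have : classQuery Q Pi ∈ DCV Q Part := Or.inl ⟨Pi, hPi, rfl⟩
      rw [← hQsRange] at this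
      obtain ⟨i, hi⟩ := this
      exact ⟨i, by rw [hi]; exact ⟨htQ, hor⟩⟩
    · have htg : t ∈ groundRest Q Part := by
        refine ⟨htQ, ?_⟩
        simp only [Set.mem_iUnion]
        rintro ⟨Pi, hPi, _, hor⟩
        exact h ⟨Pi, hPi, hor⟩
      have : groundRest Q Part ∈ DCV Q Part := Or.inr ⟨rfl, t, htg⟩
      rw [← hQsRange] at this
      obtain ⟨i, hi⟩ := this
      exact ⟨i, by rw [hi]; exact htg⟩
  have hNodesCover : ∀ v ∈ nodes Q, ∃ i, v ∈ nodes (Qs i) := by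
    rintro v ⟨t, htQ, hend⟩
    obtain ⟨i, hti⟩ := hMem t htQ
    exact ⟨i, t, hti, hend⟩
  have hVarsCover : ∀ v ∈ varsOf Var Q, ∃ i, v ∈ varsOf Var (Qs i) := by
    intro v hv
    have hv' := hv
    rw [← hcover] at hv'
    obtain ⟨Pi, hPi, hvPi⟩ := hv'
    have : classQuery Q Pi ∈ DCV Q Part := Or.inl ⟨Pi, hPi, rfl⟩
    rw [← hQsRange] at this
    obtain ⟨i, hi⟩ := this
    refine ⟨i, ?_⟩
    rw [hi, varsOf_classQuery' hPart' hPi]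
    exact hvPi
  have hVarsDisj : ∀ i j, i ≠ j → ∀ v, v ∈ varsOf Var (Qs i) → v ∈ varsOf Var (Qs j) → False := by
    intro i j hij v hvi hvj
    rcases hClass i with hei | ⟨Pi, hPi, hqi, hvi'⟩
    · rw [hei] at hvi; exact hvi
    · rcases hClass j with hej | ⟨Pj, hPj, hqj, hvj'⟩
      · rw [hej] at hvj; exact hvj
      · by_cases hPij : Pi = Pj
        · exact hij (hQsInj (by rw [hqi, hqj, hPij]))
        · exact Set.disjoint_left.mp (hdisj Pi hPi Pj hPj hPij)
            (hvi' ▸ hvi) (hvj' ▸ hvj)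
  -- compatibility of families of subquery embeddings
  have hEmbCompat : ∀ (es : Fin n → N → Option N),
      (∀ i, TotalEmb Var (Qs i) G (es i)) →
      ∀ i j v a b, es i v = some a → es j v = some b → a = b := by
    intro es hes i j v a b ha hb
    have hvi : v ∈ nodes (Qs i) := ((hes i).1 v).mp (by rw [ha]; rfl)
    have hvj : v ∈ nodes (Qs j) := ((hes j).1 v).mp (by rw [hb]; rfl)
    by_cases hv : v ∈ Var
    · have hij : i = j := by
        by_contra hij
        exact hVarsDisj i j hij v ⟨hvi, hv⟩ ⟨hvj, hv⟩
      subst hij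
      rw [ha] at hb; exact (Option.some_injective _ hb)
    · have ha' := (hes i).2.1 v hvi hv
      have hb' := (hes j).2.1 v hvj hv
      rw [ha] at ha'; rw [hb] at hb'
      simp only [Option.some.injEq] at ha' hb'
      rw [ha', hb']
  have hLC : ∀ (es : Fin n → N → Option N),
      (∀ i, TotalEmb Var (Qs i) G (es i)) → ListCompat (List.ofFn es) := by
    intro es hes e₁ h₁ e₂ h₂ v a b ha hb
    rw [List.mem_ofFn] at h₁ h₂
    obtain ⟨i, hi⟩ := h₁
    obtain ⟨j, hj⟩ := h₂
    exact hEmbCompat es hes i j v a b (hi ▸ ha) (hj ▸ hb)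
  -- key: joins of subquery embeddings are embeddings of Q, with matching answers
  have key : ∀ (es : Fin n → N → Option N), (∀ i, TotalEmb Var (Qs i) G (es i)) →
      TotalEmb Var Q G (pjoinList (List.ofFn es)) ∧
      answerOf Var Q (pjoinList (List.ofFn es)) =
        pjoinList (List.ofFn fun i => answerOf Var (Qs i) (es i)) := by
    intro es hes
    have hcomp := hLC es hes
    have hmem : ∀ i, es i ∈ List.ofFn es := by
      intro i; rw [List.mem_ofFn]; exact ⟨i, rfl⟩
    constructor
    · refine ⟨?_, ?_, ?_⟩
      · intro v
        rw [Option.isSome_iff_exists]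
        constructor
        · rintro ⟨a, ha⟩
          obtain ⟨g, hg, hga⟩ := pjoinList_some_mem' ha
          rw [List.mem_ofFn] at hg
          obtain ⟨i, hi⟩ := hg
          exact hNodesSub i (((hes i).1 v).mp (by rw [hi, hga]; rfl))
        · intro hv
          obtain ⟨i, hvi⟩ := hNodesCover v hv
          obtain ⟨a, ha⟩ := Option.isSome_iff_exists.mp (((hes i).1 v).mpr hvi)
          exact ⟨a, (pjoinList_some_iff' hcomp).mpr ⟨es i, hmem i, ha⟩⟩
      · intro v hv hnv
        obtain ⟨i, hvi⟩ := hNodesCover v hv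
        exact (pjoinList_some_iff' hcomp).mpr ⟨es i, hmem i, (hes i).2.1 v hvi hnv⟩
      · intro t ht
        obtain ⟨i, hti⟩ := hMem t ht
        obtain ⟨s', o', hs, ho, hg⟩ := (hes i).2.2 t hti
        exact ⟨s', o', (pjoinList_some_iff' hcomp).mpr ⟨es i, hmem i, hs⟩,
          (pjoinList_some_iff' hcomp).mpr ⟨es i, hmem i, ho⟩, hg⟩
    · have hcompA : ListCompat (List.ofFn fun i => answerOf Var (Qs i) (es i)) := by
        intro e₁ h₁ e₂ h₂ v a b ha hb
        rw [List.mem_ofFn] at h₁ h₂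
        obtain ⟨i, hi⟩ := h₁
        obtain ⟨j, hj⟩ := h₂
        rw [← hi] at ha; rw [← hj] at hb
        exact hEmbCompat es hes i j v a b (restrictTo_some'.mp ha).2 (restrictTo_some'.mp hb).2
      funext v
      by_cases hv : v ∈ varsOf Var Q
      · obtain ⟨j, hvj⟩ := hVarsCover v hv
        obtain ⟨b, hb⟩ := Option.isSome_iff_exists.mp (((hes j).1 v).mpr hvj.1)
        have hL : answerOf Var Q (pjoinList (List.ofFn es)) v = some b := by
          unfold answerOf
          rw [restrictTo_some']
          exact ⟨hv, (pjoinList_some_iff' hcomp).mpr ⟨es j, hmem j, hb⟩⟩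
        have hR : pjoinList (List.ofFn fun i => answerOf Var (Qs i) (es i)) v = some b := by
          rw [pjoinList_some_iff' hcompA]
          refine ⟨answerOf Var (Qs j) (es j), by rw [List.mem_ofFn]; exact ⟨j, rfl⟩, ?_⟩
          unfold answerOf
          rw [restrictTo_some']
          exact ⟨hvj, hb⟩
        rw [hL, hR]
      · have hL : answerOf Var Q (pjoinList (List.ofFn es)) v = none := by
          unfold answerOf restrictTo; simp [hv]
        have hR : pjoinList (List.ofFn fun i => answerOf Var (Qs i) (es i)) v = none := by
          rw [pjoinList_none']
          intro g hg
          rw [List.mem_ofFn] at hg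
          obtain ⟨i, hi⟩ := hg
          cases hgv : g v with
          | none => rfl
          | some a =>
            rw [← hi] at hgv
            exact absurd (hVarsSub i (restrictTo_some'.mp hgv).1) hv
        rw [hL, hR]
  -- restriction: an embedding of Q decomposes
  have restr : ∀ e, TotalEmb Var Q G e →
      (∀ i, TotalEmb Var (Qs i) G (restrictTo (nodes (Qs i)) e)) ∧
      e = pjoinList (List.ofFn fun i => restrictTo (nodes (Qs i)) e) := by
    intro e he
    have hres : ∀ i, TotalEmb Var (Qs i) G (restrictTo (nodes (Qs i)) e) := by
      intro i
      refine ⟨?_, ?_, ?_⟩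
      · intro v
        by_cases hvi : v ∈ nodes (Qs i)
        · simp only [restrictTo, hvi, if_pos, iff_true]
          exact (he.1 v).mpr (hNodesSub i hvi)
        · simp [restrictTo, hvi]
      · intro v hvi hnv
        simp only [restrictTo, hvi, if_pos]
        exact he.2.1 v (hNodesSub i hvi) hnv
      · intro t ht
        obtain ⟨s', o', hs, ho, hg⟩ := he.2.2 t (hQsSub i ht)
        have hsn : subj t ∈ nodes (Qs i) := ⟨t, ht, Or.inl rfl⟩
        have hon : obj t ∈ nodes (Qs i) := ⟨t, ht, Or.inr rfl⟩
        exact ⟨s', o', by simp only [restrictTo, hsn, if_pos]; exact hs,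
          by simp only [restrictTo, hon, if_pos]; exact ho, hg⟩
    refine ⟨hres, ?_⟩
    have hcomp := hLC _ hres
    funext v
    cases hEv : e v with
    | none =>
      symm
      rw [pjoinList_none']
      intro g hg
      rw [List.mem_ofFn] at hg
      obtain ⟨i, hi⟩ := hg
      rw [← hi]
      show restrictTo (nodes (Qs i)) e v = none
      unfold restrictTo
      split <;> simp [hEv]
    | some a =>
      symm
      rw [pjoinList_some_iff' hcomp]
      have hvQ : v ∈ nodes Q := (he.1 v).mp (by rw [hEv]; rfl)
      obtain ⟨i, hvi⟩ := hNodesCover v hvQ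
      refine ⟨restrictTo (nodes (Qs i)) e, by rw [List.mem_ofFn]; exact ⟨i, rfl⟩, ?_⟩
      simp only [restrictTo, hvi, if_pos]
      exact hEv
  constructor
  · ext e
    simp only [Set.mem_setOf_eq]
    constructor
    · intro he
      obtain ⟨hres, heq⟩ := restr e he
      exact ⟨fun i => restrictTo (nodes (Qs i)) e, hres, heq⟩
    · rintro ⟨es, hes, rfl⟩
      exact (key es hes).1
  · ext a
    simp only [answers, Set.mem_setOf_eq]
    constructor
    · rintro ⟨e, he, rfl⟩
      obtain ⟨hres, heq⟩ := restr e he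
      refine ⟨fun i => answerOf Var (Qs i) (restrictTo (nodes (Qs i)) e),
        fun i => ⟨restrictTo (nodes (Qs i)) e, hres i, rfl⟩, ?_⟩
      have h2 := (key _ hres).2
      rw [← heq] at h2
      exact h2
    · rintro ⟨as, has, rfl⟩
      choose es hes1 hes2 using has
      refine ⟨pjoinList (List.ofFn es), (key es hes1).1, ?_⟩
      rw [(key es hes1).2]
      have hfe : as = fun i => answerOf Var (Qs i) (es i) := funext hes2
      rw [hfe]
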